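/- arXiv:2202.00491 — 3 statements merged into one kernel-verified Lean document; each statement's English description precedes it below -/
import Mathlib

section
/- Let x̄ ∈ Lip(□^d, ℝ^{d+n}) denote the parametrized map x̄(s) := (s, x(s)), let U ∈ O_{d,d+n} select the first d coordinates (so that J[x̄_U] ≡ 1 almost everywhere), and view each P ∈ O_{d,n} as the element of O_{d,d+n} selecting coordinates d+P(1),…,d+P(d) (so that J[x̄_P] = J[x_P] almost everywhere); set W := {U} ∪ O_{d,n} ⊆ O_{d,d+n}. If x, y ∈ Lip(□^d, ℝ^n) satisfy Φ_m^{P,π}(x̄) = Φ_m^{P,π}(ȳ) for every m ≥ 1, every P ∈ W^m, and every π ∈ Σ_m^d, then J[x_P](s) = J[y_P](s) for almost every s ∈ [0,1]^d and every P ∈ O_{d,n}; that is, x and y are Jacobian equivalent. -/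
open MeasureTheory

open scoped Classical

noncomputable section

/-- The unit cube `[0,1]^d` as a subset of `Fin d → ℝ`. -/
def unitCube (d : ℕ) : Set (Fin d → ℝ) := Set.Icc 0 1

/-- Lipschitz condition with constant `L`, with respect to Euclidean norms. -/
def EuclidLip {d n : ℕ} (L : ℝ) (x : (Fin d → ℝ) → Fin n → ℝ) : Prop :=
  ∀ s t : Fin d → ℝ,
    Real.sqrt (∑ k, (x s k - x t k) ^ 2) ≤ L * Real.sqrt (∑ j, (s j - t j) ^ 2)

/-- Lipschitz map. -/
def IsLipMap {d n : ℕ} (x : (Fin d → ℝ) → Fin n → ℝ) : Prop :=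
  ∃ L : ℝ, EuclidLip L x

/-- The Jacobian minor `J[x_P](s)`: the determinant of the `d × d` matrix
with `(i,j)` entry `∂ x_{P i} / ∂ s_j (s)`. -/
def jacobianMinor {d n : ℕ} (x : (Fin d → ℝ) → Fin n → ℝ) (P : Fin d → Fin n)
    (s : Fin d → ℝ) : ℝ :=
  (Matrix.of fun i j : Fin d => fderiv ℝ (fun t => x t (P i)) s (Pi.single j 1)).det

/-- The permuted `m`-simplex `Δ^m_π(a,b)`. -/
def permSimplex {m : ℕ} (π : Equiv.Perm (Fin m)) (a b : ℝ) : Set (Fin m → ℝ) :=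
  {u | (∀ i, u i ∈ Set.Icc a b) ∧ StrictMono fun i => u (π i)}

/-- The integration domain `D^{m,d}_π(a,b) = Δ^m_{π 1}(a₁,b₁) × ⋯ × Δ^m_{π d}(a_d,b_d)`. -/
def intDomain {m d : ℕ} (π : Fin d → Equiv.Perm (Fin m)) (a b : Fin d → ℝ) :
    Set (Fin m → Fin d → ℝ) :=
  {t | ∀ j, (fun i => t i j) ∈ permSimplex (π j) (a j) (b j)}

/-- The restricted mapping space monomial `Φ_m^{P,π}(x)_{a,b}`. -/
def msMonomialOn {d n m : ℕ} (x : (Fin d → ℝ) → Fin n → ℝ)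
    (P : Fin m → Fin d → Fin n) (π : Fin d → Equiv.Perm (Fin m))
    (a b : Fin d → ℝ) : ℝ :=
  ∫ t in intDomain π a b, ∏ i, jacobianMinor x (P i) (t i)

/-- The mapping space monomial `Φ_m^{P,π}(x)`. -/
def msMonomial {d n m : ℕ} (x : (Fin d → ℝ) → Fin n → ℝ)
    (P : Fin m → Fin d → Fin n) (π : Fin d → Equiv.Perm (Fin m)) : ℝ :=
  msMonomialOn x P π (fun _ => 0) (fun _ => 1)

/-- The parametrized map `x̄(s) = (s, x(s))`. -/
def parametrize {d n : ℕ} (x : (Fin d → ℝ) → Fin n → ℝ) :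
    (Fin d → ℝ) → Fin (d + n) → ℝ :=
  fun s => Fin.append s (x s)

/-!
Take the word `P = (Q, U, …, U)` of length `N + 1`. Since `J[x̄_U] ≡ 1`, the monomial
`Φ^{P,π}(x̄)` equals `∫_{D_π} J[x_Q](t₀) dt`. Up to the null set where two rows tie, the simplices
`D_π` that put row `0` at rank `k j` in each column `j` tile the region where exactly `k j` of the
other `N` rows lie below row `0`. That region splits into cells according to which rows lie below,
and integrating those rows out of a cell leaves
`∫_{[0,1]^d} J[x_Q](s) ∏ⱼ s_j^{k_j} (1 - s_j)^{N - k_j} ds`. So all these Bernstein moments of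
`J[x_Q] - J[y_Q]` vanish; they span the polynomial moments, and a bounded function on the cube
whose polynomial moments vanish is zero almost everywhere by Stone–Weierstrass.
-/

open Finset Function

theorem measurable_jacobianMinor {d n : ℕ} (x : (Fin d → ℝ) → Fin n → ℝ) (P : Fin d → Fin n) :
    Measurable (jacobianMinor x P) := by
  unfold jacobianMinor
  simp only [Matrix.det_apply, Matrix.of_apply, Units.smul_def, zsmul_eq_mul]
  exact measurable_sum _ fun σ _ => (measurable_prod _ fun i _ =>
    measurable_fderiv_apply_const ℝ _ _).const_mul _

theorem sqrt_sum_sq_sub_le {d : ℕ} (s t : Fin d → ℝ) :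
    √(∑ j, (s j - t j) ^ 2) ≤ √d * dist s t := by
  rw [← Real.sqrt_sq dist_nonneg, ← Real.sqrt_mul d.cast_nonneg]
  refine Real.sqrt_le_sqrt ?_
  calc ∑ j, (s j - t j) ^ 2 ≤ ∑ _j : Fin d, dist s t ^ 2 := by
        refine sum_le_sum fun j _ => ?_
        rw [← sq_abs, ← Real.dist_eq]
        gcongr
        exact dist_le_pi_dist s t j
    _ = d * dist s t ^ 2 := by simp

theorem EuclidLip.lipschitzWith_apply {d n : ℕ} {L : ℝ} {x : (Fin d → ℝ) → Fin n → ℝ}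
    (hx : EuclidLip L x) (k : Fin n) :
    LipschitzWith ⟨|L| * √d, by positivity⟩ fun s => x s k := by
  refine LipschitzWith.of_dist_le_mul fun s t => ?_
  calc dist (x s k) (x t k) ≤ √(∑ k, (x s k - x t k) ^ 2) := by
        rw [Real.dist_eq]
        exact Real.abs_le_sqrt (single_le_sum (f := fun k => (x s k - x t k) ^ 2)
          (fun _ _ => sq_nonneg _) (mem_univ k))
    _ ≤ |L| * √(∑ j, (s j - t j) ^ 2) := (hx s t).trans (by gcongr; exact le_abs_self L)
    _ ≤ |L| * √d * dist s t := by
        rw [mul_assoc]; gcongr; exact sqrt_sum_sq_sub_le s t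

theorem IsLipMap.exists_abs_jacobianMinor_le {d n : ℕ} {x : (Fin d → ℝ) → Fin n → ℝ}
    (hx : IsLipMap x) (P : Fin d → Fin n) : ∃ C, ∀ s, |jacobianMinor x P s| ≤ C := by
  obtain ⟨L, hL⟩ := hx
  refine ⟨d.factorial * (|L| * √d) ^ d, fun s => ?_⟩
  have hentry : ∀ i j : Fin d,
      |fderiv ℝ (fun t => x t (P i)) s (Pi.single j 1)| ≤ |L| * √d := fun i j =>
    calc |fderiv ℝ (fun t => x t (P i)) s (Pi.single j 1)|
        ≤ ‖fderiv ℝ (fun t => x t (P i)) s‖ * ‖(Pi.single j 1 : Fin d → ℝ)‖ :=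
          ContinuousLinearMap.le_opNorm (fderiv ℝ (fun t => x t (P i)) s) _
      _ ≤ |L| * √d := by
          rw [Pi.norm_single, norm_one, mul_one]
          exact norm_fderiv_le_of_lipschitz ℝ (hL.lipschitzWith_apply (P i))
  simpa [jacobianMinor, nsmul_eq_mul] using
    Matrix.det_le (abv := AbsoluteValue.abs) (A := Matrix.of fun i j : Fin d =>
      fderiv ℝ (fun t => x t (P i)) s (Pi.single j 1)) hentry

theorem jacobianMinor_parametrize_natAdd {d n : ℕ} (x : (Fin d → ℝ) → Fin n → ℝ)
    (Q : Fin d → Fin n) :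
    jacobianMinor (parametrize x) (fun j => Fin.natAdd d (Q j)) = jacobianMinor x Q := by
  funext s
  simp only [jacobianMinor, parametrize, Fin.append_right]

theorem jacobianMinor_parametrize_castAdd {d n : ℕ} (x : (Fin d → ℝ) → Fin n → ℝ)
    (s : Fin d → ℝ) : jacobianMinor (parametrize x) (fun j => Fin.castAdd n j) s = 1 := by
  have hid : (Matrix.of fun i j : Fin d =>
      fderiv ℝ (fun t : Fin d → ℝ => t i) s (Pi.single j 1)) = 1 := by
    ext i j
    rw [Matrix.of_apply, fderiv_apply differentiableAt_id i]
    simp [Pi.single_apply, Matrix.one_apply]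
  simp only [jacobianMinor, parametrize, Fin.append_left, hid, Matrix.det_one]

theorem msMonomial_parametrize_cons {d n N : ℕ} (x : (Fin d → ℝ) → Fin n → ℝ)
    (Q : Fin d → Fin n) (π : Fin d → Equiv.Perm (Fin (N + 1))) :
    msMonomial (parametrize x)
        (Fin.cons (fun j => Fin.natAdd d (Q j)) fun _ j => Fin.castAdd n j) π =
      ∫ t in intDomain π (fun _ => 0) (fun _ => 1), jacobianMinor x Q (t 0) := by
  simp only [msMonomial, msMonomialOn, Fin.prod_univ_succ, Fin.cons_zero, Fin.cons_succ,
    jacobianMinor_parametrize_natAdd, jacobianMinor_parametrize_castAdd, prod_const_one, mul_one]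

section Ranks

variable {α : Type*} [LinearOrder α]

theorem Tuple.eq_sort_of_strictMono {m : ℕ} {v : Fin m → α} {σ : Equiv.Perm (Fin m)}
    (hσ : StrictMono fun i => v (σ i)) : σ = Tuple.sort v :=
  Tuple.eq_sort_iff.2 ⟨hσ.monotone, fun _ _ hij heq => absurd heq (hσ hij).ne⟩

theorem card_filter_lt_of_strictMono {m : ℕ} {v : Fin m → α} {σ : Equiv.Perm (Fin m)}
    (hσ : StrictMono fun i => v (σ i)) (p : Fin m) : #{i | v i < v (σ p)} = p := by
  have himage : ({i | v i < v (σ p)} : Finset (Fin m)) = (Iio p).map σ.toEmbedding := by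
    ext i
    obtain ⟨q, rfl⟩ := σ.surjective i
    simp [hσ.lt_iff_lt]
  rw [himage, card_map, Fin.card_Iio]

theorem exists_perm_apply_eq_zero_iff {N : ℕ} {v : Fin (N + 1) → α}
    (hv : Injective v) (k : Fin (N + 1)) :
    (∃ σ : Equiv.Perm (Fin (N + 1)), σ k = 0 ∧ StrictMono fun i => v (σ i)) ↔
      #{i : Fin N | v i.succ < v 0} = k := by
  have hrank : ∀ σ : Equiv.Perm (Fin (N + 1)), StrictMono (fun i => v (σ i)) →
      #{i : Fin N | v i.succ < v 0} = σ.symm 0 := fun σ hσ => by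
    simpa [Fin.card_filter_univ_succ] using card_filter_lt_of_strictMono hσ (σ.symm 0)
  constructor
  · rintro ⟨σ, hσk, hσ⟩
    rw [hrank σ hσ, ← hσk, Equiv.symm_apply_apply]
  · intro hk
    have hsort : StrictMono fun i => v (Tuple.sort v i) :=
      (Tuple.monotone_sort v).strictMono_of_injective (hv.comp (Tuple.sort v).injective)
    refine ⟨Tuple.sort v, ?_, hsort⟩
    rw [← Equiv.eq_symm_apply, ← Fin.val_inj, ← hrank _ hsort, hk]

end Ranks

theorem measurableSet_unitCube (d : ℕ) : MeasurableSet (unitCube d) := measurableSet_Icc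

theorem mem_unitCube {d : ℕ} {s : Fin d → ℝ} : s ∈ unitCube d ↔ ∀ j, s j ∈ Set.Icc 0 1 := by
  simp only [unitCube, ← Set.pi_univ_Icc, Set.mem_univ_pi, Pi.zero_apply, Pi.one_apply]

theorem mem_Icc_zero_one_iff {ι κ : Type*} {t : ι → κ → ℝ} :
    t ∈ Set.Icc (0 : ι → κ → ℝ) 1 ↔ ∀ i j, t i j ∈ Set.Icc 0 1 := by
  simp only [← Set.pi_univ_Icc, Set.mem_univ_pi, Pi.zero_apply, Pi.one_apply]

theorem mem_intDomain_zero_one_iff {m d : ℕ} {π : Fin d → Equiv.Perm (Fin m)}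
    {t : Fin m → Fin d → ℝ} :
    t ∈ intDomain π (fun _ => 0) (fun _ => 1) ↔
      t ∈ Set.Icc 0 1 ∧ ∀ j, StrictMono fun i => t (π j i) j := by
  simp only [intDomain, permSimplex, Set.mem_ofPred_eq, mem_Icc_zero_one_iff, forall_and]
  exact and_congr_left' forall_comm

theorem measurableSet_intDomain {m d : ℕ} (π : Fin d → Equiv.Perm (Fin m)) :
    MeasurableSet (intDomain π (fun _ => 0) (fun _ => 1)) := by
  have : intDomain π (fun _ => 0) (fun _ => 1) =
      Set.Icc 0 1 ∩ {t | ∀ j, ∀ i i', i < i' → t (π j i) j < t (π j i') j} := by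
    ext t
    simp [mem_intDomain_zero_one_iff, StrictMono]
  rw [this]
  exact measurableSet_Icc.inter (Measurable.setOf (by fun_prop))

def bernsteinCell {N d : ℕ} (S : Fin d → Finset (Fin N)) : Set (Fin (N + 1) → Fin d → ℝ) :=
  {t | t ∈ Set.Icc 0 1 ∧ ∀ i j, i ∈ S j ↔ t i.succ j < t 0 j}

theorem measurableSet_bernsteinCell {N d : ℕ} (S : Fin d → Finset (Fin N)) :
    MeasurableSet (bernsteinCell S) :=
  measurableSet_Icc.inter (Measurable.setOf (by fun_prop))

theorem pairwise_disjoint_intDomain {m d : ℕ} :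
    Pairwise (Disjoint on fun π : Fin d → Equiv.Perm (Fin m) =>
      intDomain π (fun _ => 0) (fun _ => 1)) := fun _ _ hne =>
  Set.disjoint_left.2 fun t ht ht' => hne <| funext fun j =>
    (Tuple.eq_sort_of_strictMono (v := fun i => t i j)
      ((mem_intDomain_zero_one_iff.1 ht).2 j)).trans
      (Tuple.eq_sort_of_strictMono ((mem_intDomain_zero_one_iff.1 ht').2 j)).symm

theorem pairwise_disjoint_bernsteinCell {N d : ℕ} :
    Pairwise (Disjoint on fun S : Fin d → Finset (Fin N) => bernsteinCell S) := fun _ _ hne =>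
  Set.disjoint_left.2 fun _ ht ht' => hne <| funext fun j => ext fun i =>
    (ht.2 i j).trans (ht'.2 i j).symm

theorem ae_injective_column {m d : ℕ} :
    ∀ᵐ t : Fin m → Fin d → ℝ, ∀ j, Injective fun i => t i j := by
  have hnull : ∀ j (a b : Fin m), a ≠ b → ∀ᵐ t : Fin m → Fin d → ℝ, t a j ≠ t b j := by
    intro j a b hab
    let ev : Fin m → (Fin m → Fin d → ℝ) →ₗ[ℝ] ℝ := fun i =>
      (LinearMap.proj j : (Fin d → ℝ) →ₗ[ℝ] ℝ) ∘ₗ LinearMap.proj i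
    let ℓ := ev a - ev b
    have hker : LinearMap.ker ℓ ≠ ⊤ := fun htop => by
      have hsingle := LinearMap.mem_ker.1
        (htop ▸ Submodule.mem_top (x := Pi.single a (Pi.single j 1)))
      simp [ℓ, ev, hab.symm] at hsingle
    refine measure_mono_null (fun t ht => ?_) (Measure.addHaar_submodule volume _ hker)
    simpa [ℓ, ev, sub_eq_zero] using ht
  simp only [Injective, ae_all_iff]
  intro j a b
  by_cases hab : a = b
  · exact Filter.Eventually.of_forall fun _ _ => hab
  · filter_upwards [hnull j a b hab] with t ht using fun h => absurd h ht

def rankSet {N d : ℕ} (k : Fin d → Fin (N + 1)) : Set (Fin (N + 1) → Fin d → ℝ) :=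
  {t | t ∈ Set.Icc 0 1 ∧ ∀ j, #{i : Fin N | t i.succ j < t 0 j} = k j}

theorem biUnion_bernsteinCell {N d : ℕ} (k : Fin d → Fin (N + 1)) :
    ⋃ S ∈ ({S | ∀ j, #(S j) = k j} : Finset (Fin d → Finset (Fin N))), bernsteinCell S =
      rankSet k := by
  ext t
  simp only [Set.mem_iUnion, mem_filter, mem_univ, true_and, exists_prop]
  constructor
  · rintro ⟨S, hS, ht⟩
    refine ⟨ht.1, fun j => ?_⟩
    rw [← hS j]
    congr 1
    ext i
    simp [ht.2 i j]
  · intro ht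
    exact ⟨fun j => {i | t i.succ j < t 0 j}, ht.2, ht.1, by simp⟩

theorem biUnion_intDomain_ae_eq {N d : ℕ} (k : Fin d → Fin (N + 1)) :
    ⋃ π ∈ ({π | ∀ j, π j (k j) = 0} : Finset (Fin d → Equiv.Perm (Fin (N + 1)))),
      intDomain π (fun _ => 0) (fun _ => 1) =ᵐ[volume] rankSet k := by
  refine Filter.eventuallyEq_set.2 ?_
  filter_upwards [ae_injective_column] with t ht
  simp only [Set.mem_iUnion, mem_filter, mem_univ, true_and, exists_prop,
    mem_intDomain_zero_one_iff, rankSet, Set.mem_ofPred_eq,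
    ← fun j => exists_perm_apply_eq_zero_iff (ht j) (k j)]
  constructor
  · rintro ⟨π, hπ, hbox, hmono⟩
    exact ⟨hbox, fun j => ⟨π j, hπ j, hmono j⟩⟩
  · rintro ⟨hbox, hperm⟩
    choose π hπ hmono using hperm
    exact ⟨π, hπ, hbox, hmono⟩

theorem setIntegral_prod_comp_fst {α β : Type*} [MeasurableSpace α] [MeasurableSpace β]
    {μ : Measure α} {ν : Measure β} [SFinite μ] [SFinite ν] {E : Set (α × β)}
    (hE : MeasurableSet E) {g : α → ℝ} (hg : IntegrableOn (fun p => g p.1) E (μ.prod ν)) :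
    ∫ p in E, g p.1 ∂μ.prod ν = ∫ a, ν.real (Prod.mk a ⁻¹' E) * g a ∂μ := by
  rw [← integral_indicator hE, integral_prod _ (hg.integrable_indicator hE)]
  congr 1 with a
  have hslice : (fun b => E.indicator (fun p => g p.1) (a, b)) =
      (Prod.mk a ⁻¹' E).indicator fun _ => g a := by
    ext b
    simp [Set.indicator_apply]
  rw [hslice, integral_indicator_const _ (measurable_prodMk_left hE), smul_eq_mul]

theorem prod_ite_mem_eq_pow_mul_pow {N : ℕ} (T : Finset (Fin N)) (a b : ℝ) :
    ∏ i, (if i ∈ T then a else b) = a ^ #T * b ^ (N - #T) := by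
  rw [prod_ite, prod_const, prod_const, filter_mem_eq_inter, univ_inter, filter_not,
    filter_mem_eq_inter, univ_inter, card_univ_sdiff, Fintype.card_fin]

theorem mem_ite_Ico_Icc_iff {p : Prop} [Decidable p] {a c : ℝ} (ha : a ∈ Set.Icc 0 1) :
    c ∈ (if p then Set.Ico 0 a else Set.Icc a 1) ↔ c ∈ Set.Icc 0 1 ∧ (p ↔ c < a) := by
  obtain ⟨ha0, ha1⟩ := ha
  split_ifs with hp
  · simp only [Set.mem_Ico, Set.mem_Icc, hp, true_iff]
    exact ⟨fun ⟨h0, h⟩ => ⟨⟨h0, by linarith⟩, h⟩, fun ⟨⟨h0, _⟩, h⟩ => ⟨h0, h⟩⟩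
  · simp only [Set.mem_Icc, hp, false_iff, not_lt]
    exact ⟨fun ⟨h, h1⟩ => ⟨⟨by linarith, h1⟩, h⟩, fun ⟨⟨_, h1⟩, h⟩ => ⟨h, h1⟩⟩

def cellSlice {N d : ℕ} (S : Fin d → Finset (Fin N)) (s : Fin d → ℝ) :
    Set (Fin N → Fin d → ℝ) :=
  Set.univ.pi fun i => Set.univ.pi fun j =>
    if i ∈ S j then Set.Ico 0 (s j) else Set.Icc (s j) 1

theorem volume_real_cellSlice {N d : ℕ} (S : Fin d → Finset (Fin N)) {s : Fin d → ℝ}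
    (hs : s ∈ unitCube d) :
    volume.real (cellSlice S s) = ∏ j, s j ^ #(S j) * (1 - s j) ^ (N - #(S j)) := by
  have hs' := mem_unitCube.1 hs
  have hlen : ∀ i j, volume (if i ∈ S j then Set.Ico 0 (s j) else Set.Icc (s j) 1) =
      ENNReal.ofReal (if i ∈ S j then s j else 1 - s j) := fun i j => by
    split_ifs <;> simp [Real.volume_Ico, Real.volume_Icc]
  have hnonneg : ∀ i j, 0 ≤ if i ∈ S j then s j else 1 - s j := fun i j => by
    split_ifs <;> linarith [(hs' j).1, (hs' j).2]
  rw [measureReal_def, cellSlice, volume_pi_pi]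
  simp_rw [volume_pi_pi, hlen, ← ENNReal.ofReal_prod_of_nonneg fun i _ => hnonneg _ i,
    ← ENNReal.ofReal_prod_of_nonneg fun i _ => prod_nonneg fun j _ => hnonneg i j]
  rw [ENNReal.toReal_ofReal (prod_nonneg fun i _ => prod_nonneg fun j _ => hnonneg i j),
    prod_comm]
  simp_rw [prod_ite_mem_eq_pow_mul_pow]

theorem mem_bernsteinCell_iff_tail {N d : ℕ} {S : Fin d → Finset (Fin N)}
    {t : Fin (N + 1) → Fin d → ℝ} :
    t ∈ bernsteinCell S ↔ t 0 ∈ unitCube d ∧ Fin.tail t ∈ cellSlice S (t 0) := by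
  simp only [bernsteinCell, cellSlice, Set.mem_ofPred_eq, mem_Icc_zero_one_iff, mem_unitCube,
    Set.mem_univ_pi, Fin.forall_fin_succ (P := fun i => ∀ j, t i j ∈ Set.Icc 0 1), Fin.tail]
  constructor
  · rintro ⟨⟨h0, hsucc⟩, hS⟩
    exact ⟨h0, fun i j => (mem_ite_Ico_Icc_iff (h0 j)).2 ⟨hsucc i j, hS i j⟩⟩
  · rintro ⟨h0, hS⟩
    exact ⟨⟨h0, fun i j => ((mem_ite_Ico_Icc_iff (h0 j)).1 (hS i j)).1⟩,
      fun i j => ((mem_ite_Ico_Icc_iff (h0 j)).1 (hS i j)).2⟩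

theorem setIntegral_bernsteinCell {N d : ℕ} (S : Fin d → Finset (Fin N)) {g : (Fin d → ℝ) → ℝ}
    (hg : IntegrableOn (fun t => g (t 0)) (bernsteinCell S)) :
    ∫ t in bernsteinCell S, g (t 0) =
      ∫ s in unitCube d, g s * ∏ j, s j ^ #(S j) * (1 - s j) ^ (N - #(S j)) := by
  let e := MeasurableEquiv.piFinSuccAbove (fun _ : Fin (N + 1) => Fin d → ℝ) 0
  have he : MeasurePreserving e (volume : Measure (Fin (N + 1) → Fin d → ℝ))
      (volume.prod volume) := volume_preserving_piFinSuccAbove _ 0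
  let E : Set ((Fin d → ℝ) × (Fin N → Fin d → ℝ)) :=
    {p | p.1 ∈ unitCube d ∧ p.2 ∈ cellSlice S p.1}
  have hcell : bernsteinCell S = e ⁻¹' E := by
    ext t
    rw [mem_bernsteinCell_iff_tail]
    rfl
  have hE : MeasurableSet E :=
    e.measurableSet_preimage.1 (hcell ▸ measurableSet_bernsteinCell S)
  rw [hcell] at hg ⊢
  change ∫ t in e ⁻¹' E, g (e t).1 = _
  rw [he.setIntegral_preimage_emb e.measurableEmbedding (fun p => g p.1) E,
    setIntegral_prod_comp_fst hE ((he.integrableOn_comp_preimage e.measurableEmbedding).1 hg),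
    ← integral_indicator (measurableSet_unitCube d)]
  congr 1 with s
  by_cases hs : s ∈ unitCube d
  · simp [E, hs, volume_real_cellSlice, mul_comm]
  · simp [E, hs]

theorem integrableOn_Icc_comp_apply {m d : ℕ} {g : (Fin d → ℝ) → ℝ} (hg : Measurable g)
    {C : ℝ} (hC : ∀ s, |g s| ≤ C) (i : Fin m) :
    IntegrableOn (fun t : Fin m → Fin d → ℝ => g (t i)) (Set.Icc 0 1) :=
  Measure.integrableOn_of_bounded isCompact_Icc.measure_lt_top.ne
    (hg.comp (measurable_pi_apply i)).aestronglyMeasurable (M := C)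
    (Filter.Eventually.of_forall fun t => hC (t i))

theorem integrableOn_intDomain_comp_apply {m d : ℕ} {g : (Fin d → ℝ) → ℝ} (hg : Measurable g)
    {C : ℝ} (hC : ∀ s, |g s| ≤ C) (π : Fin d → Equiv.Perm (Fin m)) (i : Fin m) :
    IntegrableOn (fun t => g (t i)) (intDomain π (fun _ => 0) (fun _ => 1)) :=
  (integrableOn_Icc_comp_apply hg hC i).mono_set fun _ ht => (mem_intDomain_zero_one_iff.1 ht).1

theorem sum_setIntegral_intDomain_eq {N d : ℕ} (k : Fin d → Fin (N + 1))
    {g : (Fin d → ℝ) → ℝ} (hg : Measurable g) {C : ℝ} (hC : ∀ s, |g s| ≤ C) :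
    ∑ π ∈ ({π | ∀ j, π j (k j) = 0} : Finset (Fin d → Equiv.Perm (Fin (N + 1)))),
        ∫ t in intDomain π (fun _ => 0) (fun _ => 1), g (t 0) =
      #({S | ∀ j, #(S j) = k j} : Finset (Fin d → Finset (Fin N))) *
        ∫ s in unitCube d, g s * ∏ j, s j ^ (k j : ℕ) * (1 - s j) ^ (N - k j) := by
  have hint := integrableOn_Icc_comp_apply (m := N + 1) hg hC 0
  rw [← integral_biUnion_finset _ (fun π _ => measurableSet_intDomain π)
      (pairwise_disjoint_intDomain.set_pairwise _)
      (fun π _ => integrableOn_intDomain_comp_apply hg hC π 0),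
    setIntegral_congr_set (biUnion_intDomain_ae_eq k), ← biUnion_bernsteinCell,
    integral_biUnion_finset _ (fun S _ => measurableSet_bernsteinCell S)
      (pairwise_disjoint_bernsteinCell.set_pairwise _)
      (fun S _ => hint.mono_set fun _ ht => ht.1),
    ← nsmul_eq_mul, ← sum_const]
  refine sum_congr rfl fun S hS => ?_
  rw [setIntegral_bernsteinCell S (hint.mono_set fun _ ht => ht.1)]
  simp only [(mem_filter.1 hS).2]

theorem setIntegral_mul_bernstein_eq_zero {N d : ℕ} (k : Fin d → Fin (N + 1))
    {g : (Fin d → ℝ) → ℝ} (hg : Measurable g) {C : ℝ} (hC : ∀ s, |g s| ≤ C)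
    (h : ∀ π : Fin d → Equiv.Perm (Fin (N + 1)), (∀ j, π j (k j) = 0) →
      ∫ t in intDomain π (fun _ => 0) (fun _ => 1), g (t 0) = 0) :
    ∫ s in unitCube d, g s * ∏ j, s j ^ (k j : ℕ) * (1 - s j) ^ (N - k j) = 0 := by
  have hcells : ({S | ∀ j, #(S j) = k j} : Finset (Fin d → Finset (Fin N))).Nonempty := by
    choose S _ hS using fun j =>
      exists_subset_card_eq (s := (univ : Finset (Fin N))) (n := k j)
        (by simpa using (k j).is_le)
    exact ⟨S, mem_filter.2 ⟨mem_univ _, hS⟩⟩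
  have hsum := sum_setIntegral_intDomain_eq k hg hC
  rw [sum_eq_zero fun π hπ => h π (mem_filter.1 hπ).2, eq_comm, mul_eq_zero] at hsum
  exact hsum.resolve_left (by exact_mod_cast hcells.card_pos.ne')

theorem pow_eq_sum_choose_mul_pow_mul_pow (a N : ℕ) (u : ℝ) :
    u ^ a = ∑ i ∈ range (N - a + 1),
      ((N - a).choose i : ℝ) * (u ^ (a + i) * (1 - u) ^ (N - (a + i))) := by
  calc u ^ a = u ^ a * (u + (1 - u)) ^ (N - a) := by rw [add_sub_cancel, one_pow, mul_one]
    _ = _ := by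
      rw [add_pow, mul_sum]
      refine sum_congr rfl fun i _ => ?_
      rw [show N - (a + i) = N - a - i by omega, pow_add]
      ring

theorem setIntegral_mul_monomial_eq_zero_of_bernstein {d : ℕ} {K : Set (Fin d → ℝ)}
    (hK : IsCompact K) {f : (Fin d → ℝ) → ℝ} (hf : IntegrableOn f K)
    (h : ∀ (N : ℕ) (k : Fin d → ℕ), (∀ j, k j ≤ N) →
      ∫ s in K, f s * ∏ j, s j ^ k j * (1 - s j) ^ (N - k j) = 0)
    (c : Fin d → ℕ) : ∫ s in K, f s * ∏ j, s j ^ c j = 0 := by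
  set N := univ.sup c
  have hcN : ∀ j, c j ≤ N := fun j => le_sup (mem_univ j)
  let I := Fintype.piFinset fun j => range (N - c j + 1)
  have hexpand : ∀ s : Fin d → ℝ, f s * ∏ j, s j ^ c j = ∑ e ∈ I,
      (∏ j, ((N - c j).choose (e j) : ℝ)) *
        (f s * ∏ j, s j ^ (c j + e j) * (1 - s j) ^ (N - (c j + e j))) := fun s => by
    simp_rw [fun j => pow_eq_sum_choose_mul_pow_mul_pow (c j) N (s j), prod_univ_sum, mul_sum,
      prod_mul_distrib]
    exact sum_congr rfl fun _ _ => by ring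
  simp_rw [hexpand]
  rw [integral_finsetSum _ fun e _ => (hf.mul_continuousOn (by fun_prop) hK).const_mul _]
  refine sum_eq_zero fun e he => ?_
  have hle : ∀ j, c j + e j ≤ N := fun j => by
    have hej := mem_range.1 (Fintype.mem_piFinset.1 he j)
    have hcj := hcN j
    omega
  rw [integral_const_mul, h N _ hle, mul_zero]

theorem setIntegral_mul_eval_eq_zero {d : ℕ} {K : Set (Fin d → ℝ)} (hK : IsCompact K)
    {f : (Fin d → ℝ) → ℝ} (hf : IntegrableOn f K)
    (h : ∀ c : Fin d → ℕ, ∫ s in K, f s * ∏ j, s j ^ c j = 0) (p : MvPolynomial (Fin d) ℝ) :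
    ∫ s in K, f s * MvPolynomial.eval s p = 0 := by
  simp_rw [MvPolynomial.eval_eq', mul_sum, mul_left_comm (f _)]
  rw [integral_finsetSum _ fun v _ => (hf.mul_continuousOn (by fun_prop) hK).const_mul _]
  exact sum_eq_zero fun v _ => by rw [integral_const_mul, h v, mul_zero]

theorem exists_mvPolynomial_near {d : ℕ} {K : Set (Fin d → ℝ)} (hK : IsCompact K)
    {φ : (Fin d → ℝ) → ℝ} (hφ : Continuous φ) {ε : ℝ} (hε : 0 < ε) :
    ∃ p : MvPolynomial (Fin d) ℝ, ∀ s ∈ K, |MvPolynomial.eval s p - φ s| < ε := by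
  let coord : Fin d → C(Fin d → ℝ, ℝ) := fun j => ⟨fun s => s j, continuous_apply j⟩
  have heval : ∀ p s, MvPolynomial.aeval coord p s = MvPolynomial.eval s p := fun p s => by
    induction p using MvPolynomial.induction_on <;> simp_all [coord]
  have hsep : (MvPolynomial.aeval (R := ℝ) coord).range.SeparatesPoints := fun s s' hne => by
    obtain ⟨j, hj⟩ := Function.ne_iff.1 hne
    exact ⟨coord j, ⟨coord j, ⟨MvPolynomial.X j, MvPolynomial.aeval_X _ _⟩, rfl⟩, hj⟩
  obtain ⟨_, ⟨p, rfl⟩, hp⟩ :=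
    ContinuousMap.exists_mem_subalgebra_near_continuous_of_isCompact_of_separatesPoints hsep
      ⟨φ, hφ⟩ hK hε
  exact ⟨p, fun s hs => heval p s ▸ hp s hs⟩

theorem setIntegral_mul_eq_zero_of_continuous {d : ℕ} {K : Set (Fin d → ℝ)} (hK : IsCompact K)
    {f : (Fin d → ℝ) → ℝ} (hf : IntegrableOn f K)
    (h : ∀ c : Fin d → ℕ, ∫ s in K, f s * ∏ j, s j ^ c j = 0)
    {φ : (Fin d → ℝ) → ℝ} (hφ : Continuous φ) : ∫ s in K, f s * φ s = 0 := by
  refine eq_of_forall_dist_le fun ε hε => ?_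
  set A := ∫ s in K, |f s|
  have hA : 0 ≤ A := integral_nonneg fun _ => abs_nonneg _
  obtain ⟨p, hp⟩ := exists_mvPolynomial_near hK hφ (show 0 < ε / (A + 1) by positivity)
  have herror : ∫ s in K, f s * (MvPolynomial.eval s p - φ s) = -∫ s in K, f s * φ s := by
    simp_rw [mul_sub]
    rw [integral_sub (hf.mul_continuousOn (MvPolynomial.continuous_eval p).continuousOn hK)
        (hf.mul_continuousOn hφ.continuousOn hK),
      setIntegral_mul_eval_eq_zero hK hf h p, zero_sub]
  have hbound : ∀ᵐ s ∂volume.restrict K,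
      ‖f s * (MvPolynomial.eval s p - φ s)‖ ≤ |f s| * (ε / (A + 1)) :=
    (ae_restrict_iff' hK.measurableSet).2 <| Filter.Eventually.of_forall fun s hs => by
      rw [Real.norm_eq_abs, abs_mul]
      exact mul_le_mul_of_nonneg_left (hp s hs).le (abs_nonneg _)
  calc dist (∫ s in K, f s * φ s) 0 = ‖∫ s in K, f s * (MvPolynomial.eval s p - φ s)‖ := by
        rw [herror, norm_neg, dist_zero_right]
    _ ≤ A * (ε / (A + 1)) := by
        simpa only [integral_mul_const] using
          norm_integral_le_of_norm_le (hf.abs.mul_const _) hbound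
    _ ≤ ε := by
        rw [mul_div_assoc', div_le_iff₀ (by positivity)]
        nlinarith

theorem ae_eq_zero_of_forall_setIntegral_mul_monomial_eq_zero {d : ℕ} {K : Set (Fin d → ℝ)}
    (hK : IsCompact K) {f : (Fin d → ℝ) → ℝ} (hf : IntegrableOn f K)
    (h : ∀ c : Fin d → ℕ, ∫ s in K, f s * ∏ j, s j ^ c j = 0) :
    ∀ᵐ s ∂volume.restrict K, f s = 0 :=
  ae_eq_zero_of_integral_contDiff_smul_eq_zero hf.locallyIntegrable fun _ hg _ => by
    simpa only [smul_eq_mul, mul_comm] using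
      setIntegral_mul_eq_zero_of_continuous hK hf h hg.continuous

theorem stmt2_general (d n : ℕ)
    (x y : (Fin d → ℝ) → Fin n → ℝ) (hx : IsLipMap x) (hy : IsLipMap y)
    (h : ∀ m : ℕ, 1 ≤ m → ∀ P : Fin m → Fin d → Fin (d + n),
      (∀ i, P i = (fun j => Fin.castAdd n j) ∨
        ∃ Q : Fin d → Fin n, StrictMono Q ∧ P i = fun j => Fin.natAdd d (Q j)) →
      ∀ π : Fin d → Equiv.Perm (Fin m),
        msMonomial (parametrize x) P π = msMonomial (parametrize y) P π) :
    ∀ Q : Fin d → Fin n, StrictMono Q →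
      ∀ᵐ s ∂(volume.restrict (unitCube d)),
        jacobianMinor x Q s = jacobianMinor y Q s := by
  intro Q hQ
  obtain ⟨Cx, hCx⟩ := hx.exists_abs_jacobianMinor_le Q
  obtain ⟨Cy, hCy⟩ := hy.exists_abs_jacobianMinor_le Q
  have hmeas := (measurable_jacobianMinor x Q).sub (measurable_jacobianMinor y Q)
  have hbdd : ∀ s, |jacobianMinor x Q s - jacobianMinor y Q s| ≤ Cx + Cy := fun s =>
    (abs_sub _ _).trans (add_le_add (hCx s) (hCy s))
  have hint : IntegrableOn (fun s => jacobianMinor x Q s - jacobianMinor y Q s) (unitCube d) :=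
    Measure.integrableOn_of_bounded isCompact_Icc.measure_lt_top.ne hmeas.aestronglyMeasurable
      (ae_of_all _ hbdd)
  have hsimplex : ∀ (N : ℕ) (π : Fin d → Equiv.Perm (Fin (N + 1))),
      ∫ t in intDomain π (fun _ => 0) (fun _ => 1),
        (jacobianMinor x Q (t 0) - jacobianMinor y Q (t 0)) = 0 := fun N π => by
    have hΦ := h (N + 1) N.succ_pos
      (Fin.cons (fun j => Fin.natAdd d (Q j)) fun _ j => Fin.castAdd n j)
      (Fin.cases (Or.inr ⟨Q, hQ, rfl⟩) fun _ => Or.inl rfl) π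
    rw [msMonomial_parametrize_cons, msMonomial_parametrize_cons] at hΦ
    rw [integral_sub (integrableOn_intDomain_comp_apply (measurable_jacobianMinor x Q) hCx π 0)
      (integrableOn_intDomain_comp_apply (measurable_jacobianMinor y Q) hCy π 0), hΦ, sub_self]
  have hmoment := setIntegral_mul_monomial_eq_zero_of_bernstein isCompact_Icc hint
    fun N k hk => setIntegral_mul_bernstein_eq_zero (fun j => ⟨k j, Nat.lt_succ_of_le (hk j)⟩)
      hmeas hbdd fun π _ => hsimplex N π
  filter_upwards [ae_eq_zero_of_forall_setIntegral_mul_monomial_eq_zero isCompact_Icc hint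
    hmoment] with s hs using sub_eq_zero.1 hs

/-- injectivity of the parametrized mapping space signature up to
Jacobian equivalence.  Here `W ⊆ O_{d,d+n}` consists of `U` (selecting the first `d`
coordinates) together with the strictly increasing maps landing in the last `n`
coordinates. -/
theorem stmt2 (d n : ℕ) (hd : 1 ≤ d) (hn : d ≤ n)
    (x y : (Fin d → ℝ) → Fin n → ℝ) (hx : IsLipMap x) (hy : IsLipMap y)
    (h : ∀ m : ℕ, 1 ≤ m → ∀ P : Fin m → Fin d → Fin (d + n),
      (∀ i, P i = (fun j => Fin.castAdd n j) ∨
        ∃ Q : Fin d → Fin n, StrictMono Q ∧ P i = fun j => Fin.natAdd d (Q j)) →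
      ∀ π : Fin d → Equiv.Perm (Fin m),
        msMonomial (parametrize x) P π = msMonomial (parametrize y) P π) :
    ∀ Q : Fin d → Fin n, StrictMono Q →
      ∀ᵐ s ∂(volume.restrict (unitCube d)),
        jacobianMinor x Q s = jacobianMinor y Q s :=
  stmt2_general d n x y hx hy h

end
end

section
/- Let x ∈ Lip(□^d, ℝ^n) have Lipschitz constant L (with respect to the Euclidean norms on [0,1]^d and ℝ^n). Then for every m ≥ 1 and every level-m index (P,π) ∈ O_{d,n}^m × Σ_m^d, |Φ_m^{P,π}(x)| ≤ L^{dm} / (m!)^d. -/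
/-!
Where the coordinates of `x_P` are differentiable, the Jacobian matrix is the derivative of a map
that is `L`-Lipschitz for the Euclidean norm; it maps the unit ball into the ball of radius `L`,
and comparing volumes gives `|J[x_P]| ≤ L^d`. Hence the integrand is bounded by `L^{dm}`.
The domain `D^{m,d}_π` is, up to transposing `t`, a product of `d` simplices, and each
`Δ^m_σ` has volume at most `1/m!`: the `m!` simplices `Δ^m_τ` are disjoint, are carried onto
one another by volume-preserving permutations of coordinates, and lie in the unit cube.
-/

open MeasureTheory

open scoped Classical

noncomputable section

section DetBound

variable {E : Type*} [NormedAddCommGroup E] [NormedSpace ℝ E] [FiniteDimensional ℝ E]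

theorem ContinuousLinearMap.abs_det_le_opNorm_pow (f : E →L[ℝ] E) :
    |LinearMap.det (f : E →ₗ[ℝ] E)| ≤ ‖f‖ ^ Module.finrank ℝ E := by
  borelize E
  set μ : Measure E := Measure.addHaar
  have h_image : f '' Metric.ball 0 1 ⊆ Metric.closedBall 0 ‖f‖ := by
    rintro _ ⟨v, hv, rfl⟩
    rw [mem_ball_zero_iff] at hv
    rw [mem_closedBall_zero_iff]
    calc ‖f v‖ ≤ ‖f‖ * ‖v‖ := f.le_opNorm v
      _ ≤ ‖f‖ := mul_le_of_le_one_right (norm_nonneg f) hv.le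
  have h_vol := measure_mono (μ := μ) h_image
  rw [Measure.addHaar_image_continuousLinearMap, Measure.addHaar_closedBall _ _ (norm_nonneg f)]
    at h_vol
  have h_ball_pos : μ (Metric.ball 0 1) ≠ 0 := (Metric.measure_ball_pos μ 0 one_pos).ne'
  have h_ball_fin : μ (Metric.ball 0 1) ≠ ⊤ := measure_ball_lt_top.ne
  exact (ENNReal.ofReal_le_ofReal_iff (by positivity)).1
    ((ENNReal.mul_le_mul_iff_left h_ball_pos h_ball_fin).1 h_vol)

theorem HasFDerivAt.abs_det_le_of_lipschitz {f : E → E} {f' : E →L[ℝ] E} {x : E}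
    (hf : HasFDerivAt f f' x) {C : NNReal} (hC : LipschitzWith C f) :
    |LinearMap.det (f' : E →ₗ[ℝ] E)| ≤ C ^ Module.finrank ℝ E :=
  f'.abs_det_le_opNorm_pow.trans (pow_le_pow_left₀ (norm_nonneg _) (hf.le_of_lipschitz hC) _)

end DetBound

section Jacobian

variable {d n : ℕ} {L : ℝ} {x : (Fin d → ℝ) → Fin n → ℝ}

theorem EuclidLip.nonneg [NeZero d] (hx : EuclidLip L x) : 0 ≤ L := by
  have h := hx (Pi.single 0 1) 0
  have h_unit : ∑ j, ((Pi.single 0 1 : Fin d → ℝ) j - (0 : Fin d → ℝ) j) ^ 2 = 1 := by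
    simp [Pi.single_apply]
  rw [h_unit, Real.sqrt_one, mul_one] at h
  exact (Real.sqrt_nonneg _).trans h

theorem EuclidLip.comp_injective (hx : EuclidLip L x) {P : Fin d → Fin n}
    (hP : Function.Injective P) : EuclidLip L fun t i => x t (P i) := by
  intro a b
  refine le_trans (Real.sqrt_le_sqrt ?_) (hx a b)
  calc ∑ i, (x a (P i) - x b (P i)) ^ 2
      = ∑ k ∈ Finset.univ.map ⟨P, hP⟩, (x a k - x b k) ^ 2 :=
        (Finset.sum_map Finset.univ ⟨P, hP⟩ fun k => (x a k - x b k) ^ 2).symm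
    _ ≤ ∑ k, (x a k - x b k) ^ 2 :=
      Finset.sum_le_sum_of_subset_of_nonneg (Finset.subset_univ _) fun _ _ _ => sq_nonneg _

theorem EuclidLip.lipschitzWith_euclidean {m : ℕ} {y : (Fin d → ℝ) → Fin m → ℝ}
    (hy : EuclidLip L y) :
    LipschitzWith L.toNNReal
      ((EuclideanSpace.equiv (Fin m) ℝ).symm ∘ y ∘ EuclideanSpace.equiv (Fin d) ℝ) := by
  refine LipschitzWith.of_dist_le_mul fun v w => ?_
  simp only [EuclideanSpace.dist_eq, Real.dist_eq, sq_abs]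
  exact (hy _ _).trans (mul_le_mul_of_nonneg_right (Real.le_coe_toNNReal L) (Real.sqrt_nonneg _))

theorem jacobianMinor_eq_det_fderiv {P : Fin d → Fin n} {s : Fin d → ℝ}
    (hdiff : ∀ i, DifferentiableAt ℝ (fun t => x t (P i)) s) :
    jacobianMinor x P s =
      LinearMap.det (fderiv ℝ (fun t i => x t (P i)) s : (Fin d → ℝ) →ₗ[ℝ] Fin d → ℝ) := by
  rw [← LinearMap.det_toMatrix', fderiv_pi hdiff]
  rfl

theorem abs_jacobianMinor_le (hx : EuclidLip L x) {P : Fin d → Fin n}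
    (hP : Function.Injective P) (s : Fin d → ℝ) : |jacobianMinor x P s| ≤ L ^ d := by
  rcases eq_or_ne d 0 with rfl | hd
  · simp [jacobianMinor]
  have : NeZero d := ⟨hd⟩
  by_cases hdiff : ∀ i, DifferentiableAt ℝ (fun t => x t (P i)) s
  · -- Conjugating by `e` replaces the sup norm of `Fin d → ℝ` by the Euclidean norm.
    set e := EuclideanSpace.equiv (Fin d) ℝ
    set G' := fderiv ℝ (fun t i => x t (P i)) s
    have hG : HasFDerivAt (fun t i => x t (P i)) G' (e (e.symm s)) := by
      rw [e.apply_symm_apply]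
      exact (differentiableAt_pi.2 hdiff).hasFDerivAt
    have hy := e.symm.hasFDerivAt.comp _ (hG.comp _ e.hasFDerivAt)
    have h_bound := hy.abs_det_le_of_lipschitz (hx.comp_injective hP).lipschitzWith_euclidean
    rw [finrank_euclideanSpace_fin, Real.coe_toNNReal _ hx.nonneg] at h_bound
    rw [jacobianMinor_eq_det_fderiv hdiff, ← LinearMap.det_conj (G' : _ →ₗ[ℝ] _)
      (e.symm : (Fin d → ℝ) ≃ₗ[ℝ] EuclideanSpace ℝ (Fin d))]
    exact h_bound
  · -- `fderiv` is `0` where a coordinate is not differentiable, so a row of the matrix vanishes.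
    obtain ⟨i, hi⟩ := not_forall.1 hdiff
    have h_row : ∀ j, (Matrix.of fun i j : Fin d =>
        fderiv ℝ (fun t => x t (P i)) s (Pi.single j 1)) i j = 0 := fun j => by
      simp [fderiv_zero_of_not_differentiableAt hi]
    rw [jacobianMinor, Matrix.det_eq_zero_of_row_eq_zero i h_row, abs_zero]
    exact pow_nonneg hx.nonneg d

end Jacobian

theorem measurePreserving_transpose {ι κ α : Type*} [Fintype ι] [Fintype κ] [MeasurableSpace α]
    (μ : Measure α) [SigmaFinite μ] :
    MeasurePreserving (fun (t : ι → κ → α) j i => t i j)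
      (Measure.pi fun _ => Measure.pi fun _ => μ) (Measure.pi fun _ => Measure.pi fun _ => μ) := by
  have h_meas : Measurable fun (t : ι → κ → α) j i => t i j := by fun_prop
  refine ⟨h_meas, (Measure.pi_eq_generateFrom (fun _ => generateFrom_pi) (fun _ => isPiSystem_pi)
    (fun _ => Measure.FiniteSpanningSetsIn.pi fun _ => μ.toFiniteSpanningSetsIn) ?_).symm⟩
  intro S hS
  choose s hs hsS using hS
  simp only [Set.mem_pi, Set.mem_univ, Set.mem_ofPred_eq, true_implies] at hs
  have h_pre : (fun (t : ι → κ → α) j i => t i j) ⁻¹' Set.univ.pi S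
      = Set.univ.pi fun i => Set.univ.pi fun j => s j i := by
    ext t
    simp [← hsS, Set.mem_pi, forall_comm (α := κ)]
  have hS_meas (j : κ) : MeasurableSet (S j) := hsS j ▸ MeasurableSet.univ_pi (hs j)
  rw [Measure.map_apply h_meas (MeasurableSet.univ_pi hS_meas), h_pre, Measure.pi_pi]
  simp_rw [← hsS, Measure.pi_pi]
  exact Finset.prod_comm

section PermSimplex

variable {m : ℕ}

theorem measurableSet_permSimplex (σ : Equiv.Perm (Fin m)) (a b : ℝ) :
    MeasurableSet (permSimplex σ a b) := by
  simp only [permSimplex, StrictMono, Set.ofPred_and, Set.ofPred_forall]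
  measurability

theorem Equiv.Perm.eq_of_strictMono_comp {α : Type*} [Preorder α] {u : Fin m → α}
    {σ τ : Equiv.Perm (Fin m)} (hσ : StrictMono (u ∘ σ)) (hτ : StrictMono (u ∘ τ)) : σ = τ := by
  have h_comp : u ∘ σ = u ∘ τ :=
    (hσ.range_inj hτ).1 (by rw [EquivLike.range_comp, EquivLike.range_comp])
  have hu : Function.Injective u := by
    simpa [Function.comp_assoc] using hσ.injective.comp σ.symm.injective
  exact Equiv.ext fun i => hu (congrFun h_comp i)

theorem permSimplex_eq_preimage (σ : Equiv.Perm (Fin m)) (a b : ℝ) :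
    permSimplex σ a b = (fun u => u ∘ σ) ⁻¹' permSimplex 1 a b := by
  ext u
  simp only [permSimplex, Set.mem_preimage, Set.mem_ofPred_eq, Function.comp_apply,
    Equiv.Perm.coe_one, id_eq]
  rw [σ.forall_congr_right (q := fun i => u i ∈ Set.Icc a b)]

theorem volume_permSimplex (σ : Equiv.Perm (Fin m)) (a b : ℝ) :
    volume (permSimplex σ a b) = volume (permSimplex (1 : Equiv.Perm (Fin m)) a b) := by
  have h := volume_measurePreserving_piCongrLeft (fun _ : Fin m => ℝ) σ.symm
  have h_coe : ⇑(MeasurableEquiv.piCongrLeft (fun _ : Fin m => ℝ) σ.symm) = fun u => u ∘ σ := by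
    funext u
    ext i
    simp [MeasurableEquiv.coe_piCongrLeft, Equiv.piCongrLeft_apply_eq_cast]
  rw [permSimplex_eq_preimage σ, ← h_coe]
  exact h.measure_preimage (measurableSet_permSimplex 1 a b).nullMeasurableSet

theorem permSimplex_disjoint {σ τ : Equiv.Perm (Fin m)} (h : σ ≠ τ) (a b : ℝ) :
    Disjoint (permSimplex σ a b) (permSimplex τ a b) :=
  Set.disjoint_left.2 fun _ hσ hτ => h (Equiv.Perm.eq_of_strictMono_comp hσ.2 hτ.2)

theorem volume_permSimplex_le (σ : Equiv.Perm (Fin m)) (a b : ℝ) :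
    volume (permSimplex σ a b) ≤ ENNReal.ofReal (b - a) ^ m / m.factorial := by
  have h_union : (m.factorial : ENNReal) * volume (permSimplex σ a b)
      = volume (⋃ τ : Equiv.Perm (Fin m), permSimplex τ a b) := by
    rw [measure_iUnion (fun τ τ' h => permSimplex_disjoint h a b)
      (fun τ => measurableSet_permSimplex τ a b), tsum_fintype, Finset.sum_congr rfl fun τ _ =>
      (volume_permSimplex τ a b).trans (volume_permSimplex σ a b).symm]
    simp [Fintype.card_perm]
  have h_cube :
      (⋃ τ : Equiv.Perm (Fin m), permSimplex τ a b) ⊆ Set.univ.pi fun _ => Set.Icc a b :=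
    Set.iUnion_subset fun τ u hu i _ => hu.1 i
  have h_vol := (h_union.trans_le (measure_mono h_cube)).trans_eq (volume_pi_pi _)
  rw [ENNReal.le_div_iff_mul_le (.inl (by simp [Nat.factorial_ne_zero])) (.inl (by simp)),
    mul_comm]
  simpa [Real.volume_Icc] using h_vol

end PermSimplex

theorem volume_intDomain {m d : ℕ} (π : Fin d → Equiv.Perm (Fin m)) (a b : Fin d → ℝ) :
    volume (intDomain π a b) = ∏ j, volume (permSimplex (π j) (a j) (b j)) := by
  have h_pre : intDomain π a b = (fun t j i => t i j) ⁻¹'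
      Set.univ.pi fun j => permSimplex (π j) (a j) (b j) := by
    ext t
    simp [intDomain, Set.mem_pi]
  have h_transpose : MeasurePreserving (fun (t : Fin m → Fin d → ℝ) j i => t i j) :=
    measurePreserving_transpose volume
  rw [h_pre, h_transpose.measure_preimage
    (MeasurableSet.univ_pi fun j => measurableSet_permSimplex _ _ _).nullMeasurableSet]
  exact volume_pi_pi _

theorem volume_intDomain_unit_le {m d : ℕ} (π : Fin d → Equiv.Perm (Fin m)) :
    volume (intDomain π (fun _ => 0) fun _ => 1) ≤ ENNReal.ofReal ((m.factorial : ℝ)⁻¹ ^ d) := by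
  rw [volume_intDomain, ENNReal.ofReal_pow (by positivity), ENNReal.ofReal_inv_of_pos
    (by positivity), ENNReal.ofReal_natCast, ← Fin.prod_const]
  exact Finset.prod_le_prod' fun j _ => (volume_permSimplex_le _ _ _).trans_eq (by simp)

theorem stmt5_general (d n m : ℕ) (L : ℝ)
    (x : (Fin d → ℝ) → Fin n → ℝ) (hx : EuclidLip L x)
    (P : Fin m → Fin d → Fin n) (hP : ∀ i, StrictMono (P i))
    (π : Fin d → Equiv.Perm (Fin m)) :
    |msMonomial x P π| ≤ L ^ (d * m) / (Nat.factorial m : ℝ) ^ d := by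
  set D := intDomain π (fun _ => (0 : ℝ)) fun _ => 1
  have h_bound (t : Fin m → Fin d → ℝ) : ‖∏ i, jacobianMinor x (P i) (t i)‖ ≤ (L ^ d) ^ m := by
    rw [Real.norm_eq_abs, Finset.abs_prod, ← Fin.prod_const]
    exact Finset.prod_le_prod (fun _ _ => abs_nonneg _)
      fun i _ => abs_jacobianMinor_le hx (hP i).injective _
  have h_vol : volume.real D ≤ (m.factorial : ℝ)⁻¹ ^ d :=
    ENNReal.toReal_le_of_le_ofReal (by positivity) (volume_intDomain_unit_le π)
  calc |msMonomial x P π| = ‖∫ t in D, ∏ i, jacobianMinor x (P i) (t i)‖ := rfl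
    _ ≤ (L ^ d) ^ m * volume.real D :=
      norm_setIntegral_le_of_norm_le_const
        ((volume_intDomain_unit_le π).trans_lt ENNReal.ofReal_lt_top) fun t _ => h_bound t
    _ ≤ (L ^ d) ^ m * (m.factorial : ℝ)⁻¹ ^ d :=
      mul_le_mul_of_nonneg_left h_vol ((norm_nonneg _).trans (h_bound 0))
    _ = L ^ (d * m) / (m.factorial : ℝ) ^ d := by rw [← pow_mul, div_eq_mul_inv, inv_pow]

/-- factorial decay bound `|Φ_m^{P,π}(x)| ≤ L^{dm} / (m!)^d` for an
`L`-Lipschitz (Euclidean norms) map `x`. -/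
theorem stmt5 (d n m : ℕ) (hd : 1 ≤ d) (hn : d ≤ n) (hm : 1 ≤ m) (L : ℝ)
    (x : (Fin d → ℝ) → Fin n → ℝ) (hx : EuclidLip L x)
    (P : Fin m → Fin d → Fin n) (hP : ∀ i, StrictMono (P i))
    (π : Fin d → Equiv.Perm (Fin m)) :
    |msMonomial x P π| ≤ L ^ (d * m) / (Nat.factorial m : ℝ) ^ d :=
  stmt5_general d n m L x hx P hP π

end
end

section
/- Let φ_j : [0,1] → [0,1], for j = 1,…,d, be Lipschitz, monotone increasing bijections, and let φ(s) := (φ_1(s_1),…,φ_d(s_d)) : [0,1]^d → [0,1]^d. Then for every x ∈ Lip(□^d, ℝ^n), every m ≥ 1, and every level-m index (P,π) ∈ O_{d,n}^m × Σ_m^d: Φ_m^{P,π}(x ∘ φ) = Φ_m^{P,π}(x). (Note x ∘ φ ∈ Lip(□^d, ℝ^n).) -/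
open MeasureTheory

open scoped Classical

noncomputable section

/-! Extend each `φ j` to a monotone Lipschitz map `ψ j` of `ℝ`; this changes the integrand of
`Φ(x ∘ φ)` only on the boundary of the cube. The map `Ψ t = (ψ j (t i j))ᵢⱼ` is a bijection of
`D^{m,d}_π` onto itself with Jacobian `∏ᵢⱼ deriv (ψ j) (t i j) ≥ 0`, so by the change of variables
formula it suffices that, for almost every `t`, the integrand of `Φ(x ∘ ψ)` at `t` is this
Jacobian times the integrand of `Φ(x)` at `Ψ t`. Where `x` is differentiable at every row of `Ψ t`
this is the chain rule. Where some `deriv (ψ j) (t i j)` vanishes, both sides vanish: `x ∘ ψ` is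
Lipschitz in terms of `ψ j` alone along the `j`-th direction, so its `j`-th partial derivative at
`t i` is zero. The remaining points are sent by `Ψ` into a null set, and an injective map has
almost everywhere vanishing Jacobian on a set with null image. -/

open Set Filter Topology MeasureTheory

section Calculus

variable {E F : Type*} [NormedAddCommGroup E] [NormedSpace ℝ E]
  [NormedAddCommGroup F] [NormedSpace ℝ F]

theorem LipschitzWith.hasDerivAt_comp_of_hasDerivAt_zero {K : NNReal} {f : E → F}
    (hf : LipschitzWith K f) {g : ℝ → E} {t : ℝ} (hg : HasDerivAt g 0 t) :
    HasDerivAt (f ∘ g) 0 t := by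
  rw [hasDerivAt_iff_isLittleO] at hg ⊢
  simp only [smul_zero, sub_zero, Function.comp_apply] at hg ⊢
  refine Asymptotics.IsBigO.trans_isLittleO (.of_bound K (.of_forall fun t' => ?_)) hg
  simpa only [← dist_eq_norm] using hf.dist_le_mul (g t') (g t)

theorem fderiv_apply_eq_zero_of_hasLineDerivAt_zero {f : E → F} {x v : E}
    (h : HasLineDerivAt ℝ f 0 x v) : fderiv ℝ f x v = 0 := by
  by_cases hf : DifferentiableAt ℝ f x
  · exact (hf.hasFDerivAt.hasLineDerivAt v).unique h
  · simp [fderiv_zero_of_not_differentiableAt hf]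

end Calculus

section PiMap

variable {ι : Type*}

theorem hasFDerivAt_piMap [Fintype ι] {E F : ι → Type*} [∀ i, NormedAddCommGroup (E i)]
    [∀ i, NormedSpace ℝ (E i)] [∀ i, NormedAddCommGroup (F i)] [∀ i, NormedSpace ℝ (F i)]
    {f : ∀ i, E i → F i} {f' : ∀ i, E i →L[ℝ] F i} {x : ∀ i, E i}
    (hf : ∀ i, HasFDerivAt (f i) (f' i) (x i)) :
    HasFDerivAt (Pi.map f) (ContinuousLinearMap.piMap f') x :=
  hasFDerivAt_pi.2 fun i => (hf i).comp x (hasFDerivAt_apply i x)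

theorem ContinuousLinearMap.det_piMap [Fintype ι] {M : Type*} [NormedAddCommGroup M]
    [NormedSpace ℝ M] [FiniteDimensional ℝ M] (f : ι → M →L[ℝ] M) :
    (ContinuousLinearMap.piMap f).det = ∏ i, (f i).det :=
  LinearMap.det_pi _

theorem hasLineDerivAt_piMap_single_zero [Fintype ι] [DecidableEq ι] {ψ : ι → ℝ → ℝ}
    {v : ι → ℝ} {j : ι} (hψ : HasDerivAt (ψ j) 0 (v j)) :
    HasLineDerivAt ℝ (Pi.map ψ) 0 v (Pi.single j 1) := by
  refine hasDerivAt_pi.2 fun j' => ?_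
  rcases eq_or_ne j' j with rfl | hj'
  · have hline : HasDerivAt (fun t : ℝ => v j' + t) 1 0 := (hasDerivAt_id 0).const_add _
    rw [← add_zero (v j')] at hψ
    simpa [Function.comp_def] using hψ.comp 0 hline
  · simpa [hj'] using hasDerivAt_const (0 : ℝ) (ψ j' (v j'))

theorem eventuallyEq_comp_piMap [Finite ι] {Y : Type*} (x : (ι → ℝ) → Y) {φ ψ : ι → ℝ → ℝ}
    {a b : ι → ℝ} (h : ∀ j, EqOn (φ j) (ψ j) (Icc (a j) (b j))) {v : ι → ℝ}
    (hv : ∀ j, v j ∈ Ioo (a j) (b j)) : x ∘ Pi.map φ =ᶠ[𝓝 v] x ∘ Pi.map ψ := by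
  filter_upwards [set_pi_mem_nhds finite_univ fun j _ => Ioo_mem_nhds (hv j).1 (hv j).2]
    with w hw
  exact congrArg x (funext fun j => h j (Ioo_subset_Icc_self (hw j (mem_univ j))))

end PiMap

section JacobianMinor

variable {d n : ℕ}

theorem jacobianMinor_congr {x y : (Fin d → ℝ) → Fin n → ℝ} {v : Fin d → ℝ} (h : x =ᶠ[𝓝 v] y)
    (Q : Fin d → Fin n) : jacobianMinor x Q v = jacobianMinor y Q v := by
  unfold jacobianMinor
  congr 2
  ext k j
  have hk : (fun t => x t (Q k)) =ᶠ[𝓝 v] fun t => y t (Q k) := h.fun_comp (· (Q k))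
  rw [hk.fderiv_eq]

theorem jacobianMinor_comp_piMap {x : (Fin d → ℝ) → Fin n → ℝ} {ψ : Fin d → ℝ → ℝ}
    {c v : Fin d → ℝ} (hψ : ∀ j, HasDerivAt (ψ j) (c j) (v j))
    (hx : DifferentiableAt ℝ x (Pi.map ψ v)) (Q : Fin d → Fin n) :
    jacobianMinor (x ∘ Pi.map ψ) Q v = (∏ j, c j) * jacobianMinor x Q (Pi.map ψ v) := by
  have hΨ := hasFDerivAt_piMap fun j => (hψ j).hasFDerivAt
  have hentry : ∀ k j, fderiv ℝ (fun t => (x ∘ Pi.map ψ) t (Q k)) v (Pi.single j 1)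
      = c j * fderiv ℝ (fun t => x t (Q k)) (Pi.map ψ v) (Pi.single j 1) := by
    intro k j
    have hxk := (differentiableAt_pi.1 hx (Q k)).hasFDerivAt
    have hcomp : HasFDerivAt (fun t => (x ∘ Pi.map ψ) t (Q k)) _ v := hxk.comp v hΨ
    rw [hcomp.fderiv, ContinuousLinearMap.comp_apply, ← smul_eq_mul, ← map_smul]
    congr 1
    ext i
    rcases eq_or_ne i j with rfl | h <;> simp [*]
  unfold jacobianMinor
  rw [← Matrix.det_mul_row]
  congr 1
  ext k j
  exact hentry k j

theorem jacobianMinor_comp_piMap_eq_zero {K : NNReal} {x : (Fin d → ℝ) → Fin n → ℝ}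
    (hx : LipschitzWith K x) {ψ : Fin d → ℝ → ℝ} {v : Fin d → ℝ} {j : Fin d}
    (hψ : HasDerivAt (ψ j) 0 (v j)) (Q : Fin d → Fin n) :
    jacobianMinor (x ∘ Pi.map ψ) Q v = 0 := by
  refine Matrix.det_eq_zero_of_column_eq_zero j fun k => ?_
  apply fderiv_apply_eq_zero_of_hasLineDerivAt_zero
  exact ((LipschitzWith.eval (Q k)).comp hx).hasDerivAt_comp_of_hasDerivAt_zero
    (hasLineDerivAt_piMap_single_zero hψ)

end JacobianMinor

section NullSets

theorem MeasureTheory.Measure.pi_setOf_exists_mem_eq_zero {ι : Type*} [Fintype ι]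
    {α : ι → Type*} [∀ i, MeasurableSpace (α i)] (μ : ∀ i, Measure (α i))
    [∀ i, SigmaFinite (μ i)] {A : ∀ i, Set (α i)} (hA : ∀ i, μ i (A i) = 0) :
    Measure.pi μ {u | ∃ i, u i ∈ A i} = 0 := by
  rw [ofPred_exists]
  exact measure_iUnion_null fun i => Measure.pi_eval_preimage_null μ (hA i)

theorem volume_setOf_exists_apply_apply_mem_eq_zero {ι κ : Type*} [Fintype ι] [Fintype κ]
    {Z : κ → Set ℝ} (hZ : ∀ j, volume (Z j) = 0) :
    volume {u : ι → κ → ℝ | ∃ i j, u i j ∈ Z j} = 0 :=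
  Measure.pi_setOf_exists_mem_eq_zero _ fun _ => Measure.pi_setOf_exists_mem_eq_zero _ hZ

theorem LipschitzWith.volume_image_eq_zero {K : NNReal} {f : ℝ → ℝ} (hf : LipschitzWith K f)
    {s : Set ℝ} (hs : volume s = 0) : volume (f '' s) = 0 := by
  have h := hf.hausdorffMeasure_image_le zero_le_one s
  rw [hausdorffMeasure_real, hs, mul_zero] at h
  exact le_antisymm h bot_le

theorem ae_det_eq_zero_of_addHaar_image_eq_zero {E : Type*} [NormedAddCommGroup E]
    [NormedSpace ℝ E] [FiniteDimensional ℝ E] [MeasurableSpace E] [BorelSpace E]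
    {μ : Measure E} [μ.IsAddHaarMeasure] {f : E → E} {f' : E → E →L[ℝ] E} {s : Set E}
    (hs : MeasurableSet s) (hf' : ∀ x ∈ s, HasFDerivWithinAt f (f' x) s x) (hf : InjOn f s)
    (himage : μ (f '' s) = 0) : ∀ᵐ x ∂μ, x ∈ s → (f' x).det = 0 := by
  rw [← lintegral_abs_det_fderiv_eq_addHaar_image μ hs hf' hf,
    lintegral_eq_zero_iff' (aemeasurable_ofReal_abs_det_fderivWithin μ hs hf')] at himage
  filter_upwards [(ae_restrict_iff' hs).1 himage] with x hx hxs
  simpa using hx hxs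

end NullSets

section ChangeOfVariables

variable {ι : Type*} [Fintype ι] {d n : ℕ}

def jacobianMinorProd (x : (Fin d → ℝ) → Fin n → ℝ) (P : ι → Fin d → Fin n)
    (t : ι → Fin d → ℝ) : ℝ :=
  ∏ i, jacobianMinor x (P i) (t i)

theorem hasFDerivAt_piMap_piMap {ψ : Fin d → ℝ → ℝ} {u : ι → Fin d → ℝ}
    (hψ : ∀ i j, DifferentiableAt ℝ (ψ j) (u i j)) :
    HasFDerivAt (Pi.map fun _ : ι => Pi.map ψ)
      (ContinuousLinearMap.piMap fun i => ContinuousLinearMap.piMap fun j =>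
        ContinuousLinearMap.toSpanSingleton ℝ (deriv (ψ j) (u i j))) u :=
  hasFDerivAt_piMap fun i => hasFDerivAt_piMap fun j => (hψ i j).hasDerivAt.hasFDerivAt

theorem ae_jacobianMinorProd_comp_piMap {K : NNReal} {x : (Fin d → ℝ) → Fin n → ℝ}
    (hx : LipschitzWith K x) {ψ : Fin d → ℝ → ℝ} (hψ : ∀ j, Measurable (ψ j))
    (P : ι → Fin d → Fin n) {s : Set (ι → Fin d → ℝ)} (hs : MeasurableSet s)
    (hdiff : ∀ u ∈ s, ∀ i j, DifferentiableAt ℝ (ψ j) (u i j))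
    (hinj : InjOn (Pi.map fun _ : ι => Pi.map ψ) s) :
    ∀ᵐ u, u ∈ s → jacobianMinorProd (x ∘ Pi.map ψ) P u =
      (∏ i, ∏ j, deriv (ψ j) (u i j)) * jacobianMinorProd x P (Pi.map (fun _ => Pi.map ψ) u) := by
  set N := {w | ¬DifferentiableAt ℝ x w}
  have hN : volume N = 0 := ae_iff.1 hx.ae_differentiableAt
  have hΨ : Measurable (Pi.map fun _ : ι => Pi.map ψ) :=
    measurable_pi_lambda _ fun i => measurable_pi_lambda _ fun j =>
      (hψ j).comp ((measurable_pi_apply j).comp (measurable_pi_apply i))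
  have hT : MeasurableSet (s ∩ Pi.map (fun _ => Pi.map ψ) ⁻¹' {t | ∃ i, t i ∈ N}) :=
    hs.inter <| hΨ <| by
      rw [ofPred_exists]
      exact .iUnion fun i => measurable_pi_apply i (measurableSet_of_differentiableAt ℝ x).compl
  have hdet := ae_det_eq_zero_of_addHaar_image_eq_zero hT
    (fun u hu => (hasFDerivAt_piMap_piMap (hdiff u hu.1)).hasFDerivWithinAt)
    (hinj.mono inter_subset_left)
    (measure_mono_null (image_subset_iff.2 inter_subset_right)
      (Measure.pi_setOf_exists_mem_eq_zero _ fun _ => hN))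
  filter_upwards [hdet] with u hu hus
  simp only [ContinuousLinearMap.det_piMap, ContinuousLinearMap.det_toSpanSingleton] at hu
  by_cases hzero : ∏ i, ∏ j, deriv (ψ j) (u i j) = 0
  · obtain ⟨i, -, hi⟩ := Finset.prod_eq_zero_iff.1 hzero
    obtain ⟨j, -, hj⟩ := Finset.prod_eq_zero_iff.1 hi
    rw [hzero, zero_mul]
    exact Finset.prod_eq_zero (Finset.mem_univ i)
      (jacobianMinor_comp_piMap_eq_zero hx (hj ▸ (hdiff u hus i j).hasDerivAt) (P i))
  · have hxdiff : ∀ i, DifferentiableAt ℝ x (Pi.map ψ (u i)) :=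
      fun i => not_not.1 fun h => hzero (hu ⟨hus, i, h⟩)
    rw [jacobianMinorProd, jacobianMinorProd, ← Finset.prod_mul_distrib]
    exact Finset.prod_congr rfl fun i _ =>
      jacobianMinor_comp_piMap (fun j => (hdiff u hus i j).hasDerivAt) (hxdiff i) (P i)

theorem setIntegral_jacobianMinorProd_comp_piMap {K : NNReal} {x : (Fin d → ℝ) → Fin n → ℝ}
    (hx : LipschitzWith K x) {ψ : Fin d → ℝ → ℝ} {Kψ : Fin d → NNReal}
    (hψmono : ∀ j, Monotone (ψ j)) (hψlip : ∀ j, LipschitzWith (Kψ j) (ψ j))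
    (P : ι → Fin d → Fin n) {s : Set (ι → Fin d → ℝ)} (hs : MeasurableSet s)
    (hinj : InjOn (Pi.map fun _ : ι => Pi.map ψ) s) :
    ∫ u in s, jacobianMinorProd (x ∘ Pi.map ψ) P u
      = ∫ t in (Pi.map fun _ : ι => Pi.map ψ) '' s, jacobianMinorProd x P t := by
  set Ψ := Pi.map fun _ : ι => Pi.map ψ
  set Z := fun j => {r | ¬DifferentiableAt ℝ (ψ j) r}
  set B := {u : ι → Fin d → ℝ | ∃ i j, u i j ∈ Z j}
  have hZ : ∀ j, volume (Z j) = 0 := fun j => ae_iff.1 (hψlip j).ae_differentiableAt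
  have hB : MeasurableSet B := by
    simp only [B, ofPred_exists]
    exact .iUnion fun i => .iUnion fun j => (measurable_pi_apply j).comp (measurable_pi_apply i)
      (measurableSet_of_differentiableAt ℝ (ψ j)).compl
  have hΨB : volume (Ψ '' B) = 0 := by
    refine measure_mono_null ?_ (volume_setOf_exists_apply_apply_mem_eq_zero
      fun j => (hψlip j).volume_image_eq_zero (hZ j))
    rintro _ ⟨u, ⟨i, j, hu⟩, rfl⟩
    exact ⟨i, j, mem_image_of_mem _ hu⟩
  have hdiff : ∀ u ∈ s \ B, ∀ i j, DifferentiableAt ℝ (ψ j) (u i j) :=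
    fun u hu i j => not_not.1 fun h => hu.2 ⟨i, j, h⟩
  have himage : Ψ '' (s \ B) =ᵐ[volume] Ψ '' s := by
    refine ae_eq_set.2 ⟨by simp [sdiff_eq_empty.2 (image_mono sdiff_subset)], ?_⟩
    refine measure_mono_null (sdiff_subset_iff.2 ?_) hΨB
    rw [← image_union, sdiff_union_self]
    exact image_mono subset_union_left
  calc ∫ u in s, jacobianMinorProd (x ∘ Pi.map ψ) P u
      = ∫ u in s \ B, jacobianMinorProd (x ∘ Pi.map ψ) P u :=
        setIntegral_congr_set
          (sdiff_null_ae_eq_self (volume_setOf_exists_apply_apply_mem_eq_zero hZ)).symm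
    _ = ∫ u in s \ B, |(ContinuousLinearMap.piMap fun i => ContinuousLinearMap.piMap fun j =>
          ContinuousLinearMap.toSpanSingleton ℝ (deriv (ψ j) (u i j))).det| •
            jacobianMinorProd x P (Ψ u) := by
        refine setIntegral_congr_ae (hs.diff hB) ?_
        filter_upwards [ae_jacobianMinorProd_comp_piMap hx (fun j => (hψmono j).measurable) P
          (hs.diff hB) hdiff (hinj.mono sdiff_subset)] with u hu hus
        simp only [hu hus, smul_eq_mul, ContinuousLinearMap.det_piMap,
          ContinuousLinearMap.det_toSpanSingleton]
        rw [abs_of_nonneg (Finset.prod_nonneg fun i _ => Finset.prod_nonneg fun j _ =>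
          (hψmono j).deriv_nonneg)]
    _ = ∫ t in Ψ '' (s \ B), jacobianMinorProd x P t :=
        (integral_image_eq_integral_abs_det_fderiv_smul volume (hs.diff hB)
          (fun u hu => (hasFDerivAt_piMap_piMap (hdiff u hu)).hasFDerivWithinAt)
          (hinj.mono sdiff_subset) _).symm
    _ = ∫ t in Ψ '' s, jacobianMinorProd x P t := setIntegral_congr_set himage

end ChangeOfVariables

theorem EuclidLip.dist_toLp_le {d n : ℕ} {L : ℝ} {x : (Fin d → ℝ) → Fin n → ℝ}
    (hx : EuclidLip L x) (s t : Fin d → ℝ) :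
    dist (WithLp.toLp 2 (x s)) (WithLp.toLp 2 (x t))
      ≤ L * dist (WithLp.toLp 2 s) (WithLp.toLp 2 t) := by
  simpa [EuclideanSpace.dist_eq, Real.dist_eq, sq_abs] using hx s t

theorem IsLipMap.exists_lipschitzWith {d n : ℕ} {x : (Fin d → ℝ) → Fin n → ℝ}
    (hx : IsLipMap x) : ∃ K, LipschitzWith K x := by
  obtain ⟨L, hL⟩ := hx
  refine ⟨L.toNNReal * (Fintype.card (Fin d) : NNReal) ^ (1 / (2 : ENNReal)).toReal,
    .of_dist_le_mul fun s t => ?_⟩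
  calc dist (x s) (x t) ≤ dist (WithLp.toLp 2 (x s)) (WithLp.toLp 2 (x t)) := by
        simpa using (PiLp.lipschitzWith_ofLp 2 fun _ : Fin n => ℝ).dist_le_mul
          (WithLp.toLp 2 (x s)) (WithLp.toLp 2 (x t))
    _ ≤ L.toNNReal * dist (WithLp.toLp 2 s) (WithLp.toLp 2 t) :=
        (hL.dist_toLp_le s t).trans
          (mul_le_mul_of_nonneg_right (Real.le_coe_toNNReal L) dist_nonneg)
    _ ≤ _ := by
        rw [NNReal.coe_mul, mul_assoc]
        gcongr
        exact (PiLp.lipschitzWith_toLp 2 fun _ : Fin d => ℝ).dist_le_mul s t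

theorem exists_monotone_lipschitzWith_eqOn {f : ℝ → ℝ} {a b : ℝ} (hab : a ≤ b) {K : NNReal}
    (hf : LipschitzOnWith K f (Icc a b)) (hmono : MonotoneOn f (Icc a b)) :
    ∃ g : ℝ → ℝ, Monotone g ∧ LipschitzWith K g ∧ EqOn f g (Icc a b) := by
  refine ⟨IccExtend hab ((Icc a b).domRestrict f),
    Monotone.IccExtend hab (monotoneOn_iff_monotone.1 hmono), ?_,
    fun r hr => by simp [IccExtend_of_mem hab _ hr]⟩
  have h := hf.to_restrict.comp (LipschitzWith.projIcc hab)
  rwa [mul_one] at h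

section IntDomain

variable {m d : ℕ} (π : Fin d → Equiv.Perm (Fin m))

theorem measurableSet_intDomain_s10 (a b : Fin d → ℝ) : MeasurableSet (intDomain π a b) := by
  simp only [intDomain, permSimplex, StrictMono, ofPred_forall, ofPred_and]
  measurability

theorem bijOn_piMap_intDomain {φ : Fin d → ℝ → ℝ} {a b a' b' : Fin d → ℝ}
    (hmono : ∀ j, StrictMonoOn (φ j) (Icc (a j) (b j)))
    (hbij : ∀ j, BijOn (φ j) (Icc (a j) (b j)) (Icc (a' j) (b' j))) :
    BijOn (Pi.map fun _ : Fin m => Pi.map φ) (intDomain π a b) (intDomain π a' b') := by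
  refine ⟨fun u hu j => ⟨fun i => (hbij j).mapsTo ((hu j).1 i),
      fun p q hpq => hmono j ((hu j).1 _) ((hu j).1 _) ((hu j).2 hpq)⟩,
    fun u hu v hv huv => funext fun i => funext fun j =>
      (hbij j).injOn ((hu j).1 i) ((hv j).1 i) (congr_fun (congr_fun huv i) j),
    fun t ht => ?_⟩
  choose u hu hut using fun i j => (hbij j).surjOn ((ht j).1 i)
  refine ⟨u, fun j => ⟨fun i => hu i j, fun p q hpq => ?_⟩, funext fun i => funext (hut i)⟩
  have hlt := (ht j).2 hpq
  simp only [← hut] at hlt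
  exact ((hmono j).lt_iff_lt (hu _ j) (hu _ j)).1 hlt

theorem msMonomialOn_comp_piMap_congr {n : ℕ} (x : (Fin d → ℝ) → Fin n → ℝ)
    (P : Fin m → Fin d → Fin n) {φ ψ : Fin d → ℝ → ℝ} {a b : Fin d → ℝ}
    (h : ∀ j, EqOn (φ j) (ψ j) (Icc (a j) (b j))) :
    msMonomialOn (x ∘ Pi.map φ) P π a b = msMonomialOn (x ∘ Pi.map ψ) P π a b := by
  have hnull : volume {u : Fin m → Fin d → ℝ | ∃ i j, u i j ∈ ({a j, b j} : Set ℝ)} = 0 :=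
    volume_setOf_exists_apply_apply_mem_eq_zero fun j => (toFinite _).measure_zero _
  refine setIntegral_congr_ae (measurableSet_intDomain_s10 π a b) ?_
  filter_upwards [compl_mem_ae_iff.2 hnull] with u hu hus
  refine Finset.prod_congr rfl fun i _ =>
    jacobianMinor_congr (eventuallyEq_comp_piMap x h fun j => ?_) (P i)
  rw [← Icc_sdiff_both]
  exact ⟨(hus j).1 i, fun h' => hu ⟨i, j, h'⟩⟩

end IntDomain

theorem stmt10_general (d n m : ℕ)
    (x : (Fin d → ℝ) → Fin n → ℝ) (hx : IsLipMap x)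
    (φ : Fin d → ℝ → ℝ)
    (hφlip : ∀ j, ∃ K : NNReal, LipschitzOnWith K (φ j) (Set.Icc 0 1))
    (hφmono : ∀ j, StrictMonoOn (φ j) (Set.Icc 0 1))
    (hφbij : ∀ j, Set.BijOn (φ j) (Set.Icc 0 1) (Set.Icc 0 1))
    (P : Fin m → Fin d → Fin n)
    (π : Fin d → Equiv.Perm (Fin m)) :
    msMonomial (fun s => x (fun j => φ j (s j))) P π = msMonomial x P π := by
  obtain ⟨K, hK⟩ := hx.exists_lipschitzWith
  choose Kφ hKφ using hφlip
  choose ψ hψmono hψlip hφψ using fun j =>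
    exists_monotone_lipschitzWith_eqOn zero_le_one (hKφ j) (hφmono j).monotoneOn
  have hbij := bijOn_piMap_intDomain π hφmono hφbij
  have hΨ : EqOn (Pi.map fun _ : Fin m => Pi.map φ) (Pi.map fun _ => Pi.map ψ)
      (intDomain π (fun _ => 0) (fun _ => 1)) :=
    fun u hu => funext fun i => funext fun j => hφψ j ((hu j).1 i)
  calc msMonomial (fun s => x (fun j => φ j (s j))) P π
      = msMonomialOn (x ∘ Pi.map ψ) P π (fun _ => 0) (fun _ => 1) :=
        msMonomialOn_comp_piMap_congr π x P hφψ
    _ = ∫ t in (Pi.map fun _ => Pi.map ψ) '' intDomain π (fun _ => 0) (fun _ => 1),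
          jacobianMinorProd x P t :=
        setIntegral_jacobianMinorProd_comp_piMap hK hψmono hψlip P
          (measurableSet_intDomain_s10 π _ _) (hbij.injOn.congr hΨ)
    _ = msMonomial x P π := by
        rw [← hΨ.image_eq, hbij.image_eq]
        rfl

/-- invariance under coordinate-wise reparametrization. -/
theorem stmt10 (d n m : ℕ) (hd : 1 ≤ d) (hn : d ≤ n) (hm : 1 ≤ m)
    (x : (Fin d → ℝ) → Fin n → ℝ) (hx : IsLipMap x)
    (φ : Fin d → ℝ → ℝ)
    (hφlip : ∀ j, ∃ K : NNReal, LipschitzOnWith K (φ j) (Set.Icc 0 1))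
    (hφmono : ∀ j, StrictMonoOn (φ j) (Set.Icc 0 1))
    (hφbij : ∀ j, Set.BijOn (φ j) (Set.Icc 0 1) (Set.Icc 0 1))
    (P : Fin m → Fin d → Fin n) (hP : ∀ i, StrictMono (P i))
    (π : Fin d → Equiv.Perm (Fin m)) :
    msMonomial (fun s => x (fun j => φ j (s j))) P π = msMonomial x P π :=
  stmt10_general d n m x hx φ hφlip hφmono hφbij P π

end
end
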